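/- Let E = E(n,c) be a uniform Cantor set with ∑ n_k c_k < ∞ (so E has positive Lebesgue measure), and let P be an n-matching sequence of positive probability vectors that is ultimately 1-uniform, i.e. there exists k₀ such that p_{k,i} = 1/n_k for all k ≥ k₀ and all i. Then the measure μ_P on E extends to a doubling measure ν on [0,1], i.e. there is a doubling measure ν on [0,1] with ν restricted to E equal to μ_P. -/

import Mathlib

open Finset MeasureTheory Filter Topology
open scoped ENNReal NNReal

/-- Length of a level-`k` component of the uniform Cantor set `E(n,c)`. -/
noncomputable def cdelta (n : ℕ → ℕ) (c : ℕ → ℝ) (k : ℕ) : ℝ :=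
  ∏ i ∈ Finset.Icc 1 k, (1 - ((n i : ℝ) - 1) * c i) / (n i : ℝ)

/-- Length of a level-`k` gap of the uniform Cantor set `E(n,c)`. -/
noncomputable def ceps (n : ℕ → ℕ) (c : ℕ → ℝ) (k : ℕ) : ℝ :=
  c k * cdelta n c (k - 1)

/-- Left endpoint of the level-`k` component indexed by the word `w` (positions `1,…,k`). -/
noncomputable def leftpt (n : ℕ → ℕ) (c : ℕ → ℝ) (w : ℕ → ℕ) (k : ℕ) : ℝ :=
  ∑ j ∈ Finset.Icc 1 k, ((w j : ℝ) - 1) * (cdelta n c j + ceps n c j)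

/-- `w` is a word of length `k`: `1 ≤ w j ≤ n j` for `1 ≤ j ≤ k`. -/
def IsWord (n : ℕ → ℕ) (w : ℕ → ℕ) (k : ℕ) : Prop :=
  ∀ j, 1 ≤ j → j ≤ k → 1 ≤ w j ∧ w j ≤ n j

/-- The level-`k` component `I_w` of the uniform Cantor set. -/
noncomputable def cInt (n : ℕ → ℕ) (c : ℕ → ℝ) (w : ℕ → ℕ) (k : ℕ) : Set ℝ :=
  Set.Icc (leftpt n c w k) (leftpt n c w k + cdelta n c k)

/-- The set `E_k`, union of all level-`k` components. -/
def levelSet (n : ℕ → ℕ) (c : ℕ → ℝ) (k : ℕ) : Set ℝ :=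
  ⋃ w ∈ {w : ℕ → ℕ | IsWord n w k}, cInt n c w k

/-- The uniform Cantor set `E(n,c) = ⋂_k E_k`. -/
def uniformCantorSet (n : ℕ → ℕ) (c : ℕ → ℝ) : Set ℝ :=
  ⋂ k, levelSet n c k

/-- Standing assumptions on the data: `n_k ≥ 2`, `c_k ∈ (0,1)`, `(n_k - 1) c_k < 1`. -/
def CantorParams (n : ℕ → ℕ) (c : ℕ → ℝ) : Prop :=
  ∀ k, 1 ≤ k → 2 ≤ n k ∧ 0 < c k ∧ c k < 1 ∧ ((n k : ℝ) - 1) * c k < 1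

/-- `p` is an `n`-matching sequence of positive probability vectors. -/
def MatchingSeq (n : ℕ → ℕ) (p : ℕ → ℕ → ℝ) : Prop :=
  ∀ k, 1 ≤ k → (∀ i, 1 ≤ i → i ≤ n k → 0 < p k i) ∧ ∑ i ∈ Finset.Icc 1 (n k), p k i = 1

/-- `μ` is the Borel probability measure on `E(n,c)` determined by the matching sequence `p`:
`μ(I_{wi}) = p_{k,i} μ(I_w)`. -/
def MatchingMeasure (n : ℕ → ℕ) (c : ℕ → ℝ) (p : ℕ → ℕ → ℝ) (μ : Measure ℝ) : Prop :=
  IsProbabilityMeasure μ ∧ μ (uniformCantorSet n c)ᶜ = 0 ∧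
    ∀ k, 1 ≤ k → ∀ w : ℕ → ℕ, IsWord n w (k - 1) → ∀ i, 1 ≤ i → i ≤ n k →
      μ (cInt n c (Function.update w k i) k) =
        ENNReal.ofReal (p k i) * μ (cInt n c w (k - 1))

/-- `μ` is doubling with constant `C` on the metric space `E` (balls of `E`). -/
def DoublingOn (μ : Measure ℝ) (E : Set ℝ) (C : ℝ≥0∞) : Prop :=
  ∀ x ∈ E, ∀ r : ℝ, 0 < r →
    0 < μ (Metric.ball x (2 * r) ∩ E) ∧
      μ (Metric.ball x (2 * r) ∩ E) ≤ C * μ (Metric.ball x r ∩ E) ∧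
      μ (Metric.ball x (2 * r) ∩ E) < ⊤

/-- The vector `(p 1, …, p k)` is `C`-uniform: any two adjacent (overlapping allowed) sums of `l`
consecutive entries are comparable within the factor `C`. -/
def IsUniform (C : ℝ) (k : ℕ) (p : ℕ → ℝ) : Prop :=
  ∀ i j l : ℕ, i ≤ j → j ≤ i + l → j + l ≤ k →
    C⁻¹ * (∑ t ∈ Finset.Ioc j (j + l), p t) ≤ (∑ t ∈ Finset.Ioc i (i + l), p t) ∧
      (∑ t ∈ Finset.Ioc i (i + l), p t) ≤ C * ∑ t ∈ Finset.Ioc j (j + l), p t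

/-!
Beyond level `K = k₀ - 1` the weights are uniform, so a level-`k` component `I_w` (`k ≥ K`) has
mass `μ(I_w) = p(w|K) · (n_{K+1} ⋯ n_k)⁻¹`, while its length is `θ_k · (n_1 ⋯ n_k)⁻¹` with
`θ_k = ∏_{j ≤ k} (1 - (n_j - 1) c_j)` bounded below by a positive constant since `∑ n_k c_k < ∞`.
So all fine components have mass comparable to their length. Covering an interval `I` by such
components and letting `k → ∞` gives `μ(I) ≤ B |I|` and `μ(I) ≥ A |I ∩ E|`. Hence
`ν = μ + (Lebesgue measure on [0,1] \ E)` restricts to `μ` on `E` and is comparable to Lebesgue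
measure on subintervals of `[0,1]`, which makes it doubling there.
-/

theorem one_sub_sum_le_prod_one_sub {ι : Type*} (s : Finset ι) {x : ι → ℝ}
    (hx : ∀ j ∈ s, 0 ≤ x j ∧ x j ≤ 1) : 1 - ∑ j ∈ s, x j ≤ ∏ j ∈ s, (1 - x j) := by
  classical
  induction s using Finset.induction_on with
  | empty => simp
  | insert a s ha ih =>
    obtain ⟨ha0, ha1⟩ := hx a (mem_insert_self a s)
    have ih := ih fun j hj => hx j (mem_insert_of_mem hj)
    have hsum : 0 ≤ ∑ j ∈ s, x j := sum_nonneg fun j hj => (hx j (mem_insert_of_mem hj)).1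
    rw [sum_insert ha, prod_insert ha]
    nlinarith [mul_le_mul_of_nonneg_left ih (sub_nonneg.2 ha1)]

theorem exists_pos_le_prod_one_sub {x : ℕ → ℝ} (hx : ∀ j, 1 ≤ j → 0 ≤ x j ∧ x j < 1)
    (hsum : Summable x) : ∃ θ > 0, ∀ k, θ ≤ ∏ j ∈ Finset.Icc 1 k, (1 - x j) := by
  classical
  have hfac : ∀ j, 1 ≤ j → 0 < 1 - x j ∧ 1 - x j ≤ 1 := fun j hj => by
    constructor <;> linarith [hx j hj]
  -- off a finite set `s` the sums of `x` are `< 1/2`, so by the previous lemma the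
  -- corresponding products are `≥ 1/2`
  obtain ⟨s, hs⟩ := hsum.vanishing (Metric.ball_mem_nhds 0 one_half_pos)
  set s₁ := s.filter (1 ≤ ·)
  have hs₁ : ∀ j ∈ s₁, 1 ≤ j := fun j hj => (Finset.mem_filter.1 hj).2
  have hhead0 : 0 < ∏ j ∈ s₁, (1 - x j) := prod_pos fun j hj => (hfac j (hs₁ j hj)).1
  refine ⟨(∏ j ∈ s₁, (1 - x j)) / 2, by positivity, fun k => ?_⟩
  have hhead : ∏ j ∈ s₁, (1 - x j) ≤ ∏ j ∈ Finset.Icc 1 k ∩ s, (1 - x j) := by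
    refine prod_le_prod_of_subset_of_le_one ?_ (fun j hj => (hfac j (hs₁ j hj)).1.le)
      (fun j hj _ => (hfac j (hs₁ j hj)).2)
    intro j hj
    obtain ⟨hjk, hjs⟩ := Finset.mem_inter.1 hj
    exact Finset.mem_filter.2 ⟨hjs, (Finset.mem_Icc.1 hjk).1⟩
  have htail : 1 / 2 ≤ ∏ j ∈ Finset.Icc 1 k \ s, (1 - x j) := by
    have hsmall := hs (Finset.Icc 1 k \ s) Finset.sdiff_disjoint
    rw [Metric.mem_ball, Real.dist_eq, sub_zero] at hsmall
    have := one_sub_sum_le_prod_one_sub (Finset.Icc 1 k \ s) fun j hj =>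
      have := hx j (Finset.mem_Icc.1 (Finset.mem_sdiff.1 hj).1).1
      ⟨this.1, this.2.le⟩
    linarith [le_abs_self (∑ j ∈ Finset.Icc 1 k \ s, x j)]
  rw [← prod_inter_mul_prod_sdiff (Finset.Icc 1 k) s]
  nlinarith

theorem prod_Icc_one_mul_prod_Ioc {M : Type*} [CommMonoid M] (f : ℕ → M) {K k : ℕ}
    (hKk : K ≤ k) :
    (∏ j ∈ Finset.Icc 1 K, f j) * ∏ j ∈ Finset.Ioc K k, f j = ∏ j ∈ Finset.Icc 1 k, f j := by
  simpa only [← Finset.Icc_add_one_left_eq_Ioc, zero_add] using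
    prod_Ioc_consecutive f (Nat.zero_le K) hKk

theorem Set.PairwiseDisjoint.countable_of_Icc {T : Set ℝ} {δ : ℝ}
    (hT : T.PairwiseDisjoint fun t => Set.Icc t (t + δ)) (hδ : 0 < δ) : T.Countable :=
  (hT.mono fun _ => Set.Ioo_subset_Icc_self).countable_of_Ioo fun _ _ => lt_add_of_pos_right _ hδ

section Covering

variable {μ : Measure ℝ} {E T : Set ℝ} {δ : ℝ}

theorem measure_Icc_le_of_cover (hT : T.PairwiseDisjoint fun t => Set.Icc t (t + δ))
    (hδ : 0 < δ) (hE : E ⊆ ⋃ t ∈ T, Set.Icc t (t + δ)) (hμE : μ Eᶜ = 0) {B : ℝ≥0∞}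
    (hB : ∀ t ∈ T, μ (Set.Icc t (t + δ)) ≤ B * volume (Set.Icc t (t + δ))) (a b : ℝ) :
    μ (Set.Icc a b) ≤ B * ENNReal.ofReal (b - a + 2 * δ) := by
  set M := {t ∈ T | a - δ ≤ t ∧ t ≤ b}
  have hM : M.Countable := (hT.countable_of_Icc hδ).mono (Set.sep_subset _ _)
  have hMd : M.PairwiseDisjoint fun t => Set.Icc t (t + δ) := hT.subset (Set.sep_subset _ _)
  have hae : ∀ᵐ x ∂μ, x ∈ E := mem_ae_iff.2 hμE
  calc μ (Set.Icc a b) ≤ μ (⋃ t ∈ M, Set.Icc t (t + δ)) := by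
        refine measure_mono_ae (hae.mono fun x hxE hxab => ?_)
        obtain ⟨t, ht, hxt⟩ := Set.mem_iUnion₂.1 (hE hxE)
        exact Set.mem_iUnion₂.2 ⟨t, ⟨ht, by linarith [hxt.2, hxab.1], hxt.1.trans hxab.2⟩, hxt⟩
    _ ≤ ∑' t : M, μ (Set.Icc t (t + δ)) := measure_biUnion_le μ hM _
    _ ≤ ∑' t : M, B * volume (Set.Icc (t : ℝ) (t + δ)) :=
        ENNReal.tsum_le_tsum fun t => hB t t.2.1
    _ = B * volume (⋃ t ∈ M, Set.Icc t (t + δ)) := by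
        rw [ENNReal.tsum_mul_left, measure_biUnion hM hMd fun _ _ => measurableSet_Icc]
    _ ≤ B * volume (Set.Icc (a - δ) (b + δ)) := by
        gcongr
        exact Set.iUnion₂_subset fun t ht => Set.Icc_subset_Icc ht.2.1 (by linarith [ht.2.2])
    _ = B * ENNReal.ofReal (b - a + 2 * δ) := by
        rw [Real.volume_Icc]
        ring_nf

theorem le_measure_Ioo_add_of_cover (hT : T.PairwiseDisjoint fun t => Set.Icc t (t + δ))
    (hδ : 0 < δ) (hE : E ⊆ ⋃ t ∈ T, Set.Icc t (t + δ)) {A : ℝ≥0∞}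
    (hA : ∀ t ∈ T, A * volume (Set.Icc t (t + δ)) ≤ μ (Set.Icc t (t + δ))) (a b : ℝ) :
    A * volume (Set.Ioo a b ∩ E) ≤ μ (Set.Ioo a b) + A * ENNReal.ofReal (2 * δ) := by
  set S := {t ∈ T | a < t ∧ t + δ < b}
  have hS : S.Countable := (hT.countable_of_Icc hδ).mono (Set.sep_subset _ _)
  have hSd : S.PairwiseDisjoint fun t => Set.Icc t (t + δ) := hT.subset (Set.sep_subset _ _)
  -- a point of `E ∩ (a, b)` outside the components inside `(a, b)` is within `δ` of `a` or `b`
  have hcover : Set.Ioo a b ∩ E ⊆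
      (⋃ t ∈ S, Set.Icc t (t + δ)) ∪ (Set.Icc a (a + δ) ∪ Set.Icc (b - δ) b) := by
    rintro x ⟨hxab, hxE⟩
    obtain ⟨t, ht, hxt⟩ := Set.mem_iUnion₂.1 (hE hxE)
    by_cases hin : a < t ∧ t + δ < b
    · exact Or.inl (Set.mem_iUnion₂.2 ⟨t, ⟨ht, hin⟩, hxt⟩)
    · rcases not_and_or.1 hin with hta | htb
      · exact Or.inr (Or.inl ⟨hxab.1.le, by linarith [hxt.2, not_lt.1 hta]⟩)
      · exact Or.inr (Or.inr ⟨by linarith [hxt.1, not_lt.1 htb], hxab.2.le⟩)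
  have hvol : volume (Set.Ioo a b ∩ E) ≤
      volume (⋃ t ∈ S, Set.Icc t (t + δ)) + ENNReal.ofReal (2 * δ) := by
    calc volume (Set.Ioo a b ∩ E)
        ≤ volume (⋃ t ∈ S, Set.Icc t (t + δ)) +
            (volume (Set.Icc a (a + δ)) + volume (Set.Icc (b - δ) b)) :=
          (measure_mono hcover).trans <| (measure_union_le _ _).trans <|
            add_le_add_right (measure_union_le _ _) _
      _ = volume (⋃ t ∈ S, Set.Icc t (t + δ)) + ENNReal.ofReal (2 * δ) := by
          rw [Real.volume_Icc, Real.volume_Icc, ← ENNReal.ofReal_add (by linarith) (by linarith)]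
          congr 2
          ring
  have hinside : A * volume (⋃ t ∈ S, Set.Icc t (t + δ)) ≤ μ (Set.Ioo a b) :=
    calc A * volume (⋃ t ∈ S, Set.Icc t (t + δ))
        = ∑' t : S, A * volume (Set.Icc (t : ℝ) (t + δ)) := by
          rw [measure_biUnion hS hSd fun _ _ => measurableSet_Icc, ENNReal.tsum_mul_left]
      _ ≤ ∑' t : S, μ (Set.Icc (t : ℝ) (t + δ)) := ENNReal.tsum_le_tsum fun t => hA t t.2.1
      _ = μ (⋃ t ∈ S, Set.Icc t (t + δ)) :=
          (measure_biUnion hS hSd fun _ _ => measurableSet_Icc).symm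
      _ ≤ μ (Set.Ioo a b) :=
          measure_mono (Set.iUnion₂_subset fun t ht => Set.Icc_subset_Ioo ht.2.1 ht.2.2)
  calc A * volume (Set.Ioo a b ∩ E)
      ≤ A * volume (⋃ t ∈ S, Set.Icc t (t + δ)) + A * ENNReal.ofReal (2 * δ) := by
        rw [← mul_add]
        gcongr
    _ ≤ μ (Set.Ioo a b) + A * ENNReal.ofReal (2 * δ) := by gcongr

end Covering

section Doubling

theorem ball_inter_Icc_subset (x s : ℝ) :
    Metric.ball x s ∩ Set.Icc 0 1 ⊆ Set.Icc (max (x - s) 0) (min (x + s) 1) := by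
  rintro y ⟨hy, hy01⟩
  rw [Real.ball_eq_Ioo] at hy
  exact ⟨max_le hy.1.le hy01.1, le_min hy.2.le hy01.2⟩

theorem Ioo_subset_ball_inter_Icc (x s : ℝ) :
    Set.Ioo (max (x - s) 0) (min (x + s) 1) ⊆ Metric.ball x s ∩ Set.Icc 0 1 := by
  rintro y ⟨hy1, hy2⟩
  rw [max_lt_iff] at hy1
  rw [lt_min_iff] at hy2
  rw [Real.ball_eq_Ioo]
  exact ⟨⟨hy1.1, hy2.1⟩, hy1.2.le, hy2.2.le⟩

theorem volume_ball_inter_Icc (x s : ℝ) :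
    volume (Metric.ball x s ∩ Set.Icc 0 1) =
      ENNReal.ofReal (min (x + s) 1 - max (x - s) 0) :=
  le_antisymm ((measure_mono (ball_inter_Icc_subset x s)).trans_eq Real.volume_Icc)
    (Real.volume_Ioo.symm.trans_le (measure_mono (Ioo_subset_ball_inter_Icc x s)))

theorem volume_ball_inter_Icc_pos {x s : ℝ} (hx : x ∈ Set.Icc (0 : ℝ) 1) (hs : 0 < s) :
    0 < volume (Metric.ball x s ∩ Set.Icc 0 1) := by
  rw [volume_ball_inter_Icc, ENNReal.ofReal_pos, sub_pos, max_lt_iff, lt_min_iff, lt_min_iff]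
  obtain ⟨hx0, hx1⟩ := hx
  refine ⟨⟨?_, ?_⟩, ?_, ?_⟩ <;> linarith

theorem volume_ball_two_mul_inter_Icc_le {x r : ℝ} (hx : x ∈ Set.Icc (0 : ℝ) 1) (hr : 0 ≤ r) :
    volume (Metric.ball x (2 * r) ∩ Set.Icc 0 1) ≤
      2 * volume (Metric.ball x r ∩ Set.Icc 0 1) := by
  rw [volume_ball_inter_Icc, volume_ball_inter_Icc, ← ENNReal.ofReal_ofNat 2,
    ← ENNReal.ofReal_mul zero_le_two]
  apply ENNReal.ofReal_le_ofReal
  obtain ⟨hx0, hx1⟩ := hx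
  simp only [min_def, max_def]
  split_ifs <;> linarith

theorem exists_doublingOn_Icc_of_comparable {ν : Measure ℝ} {m M : ℝ} (hm : 0 < m)
    (hlow : ∀ a b, 0 ≤ a → b ≤ 1 → ENNReal.ofReal m * volume (Set.Ioo a b) ≤ ν (Set.Ioo a b))
    (hup : ∀ a b, 0 ≤ a → b ≤ 1 → ν (Set.Icc a b) ≤ ENNReal.ofReal M * volume (Set.Icc a b)) :
    ∃ D : ℝ≥0∞, 1 ≤ D ∧ D < ⊤ ∧ DoublingOn ν (Set.Icc 0 1) D := by
  have hball : ∀ x s, ENNReal.ofReal m * volume (Metric.ball x s ∩ Set.Icc 0 1) ≤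
      ν (Metric.ball x s ∩ Set.Icc 0 1) ∧
      ν (Metric.ball x s ∩ Set.Icc 0 1) ≤
        ENNReal.ofReal M * volume (Metric.ball x s ∩ Set.Icc 0 1) := fun x s => by
    have hlo : 0 ≤ max (x - s) 0 := le_max_right _ _
    have hhi : min (x + s) 1 ≤ 1 := min_le_right _ _
    rw [volume_ball_inter_Icc]
    refine ⟨?_, ?_⟩
    · rw [← Real.volume_Ioo]
      exact (hlow _ _ hlo hhi).trans (measure_mono (Ioo_subset_ball_inter_Icc x s))
    · rw [← Real.volume_Icc]
      exact (measure_mono (ball_inter_Icc_subset x s)).trans (hup _ _ hlo hhi)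
  have hmM : m ≤ M := by
    have h01 := (hlow 0 1 le_rfl le_rfl).trans
      ((measure_mono Set.Ioo_subset_Icc_self).trans (hup 0 1 le_rfl le_rfl))
    rw [Real.volume_Ioo, Real.volume_Icc, ENNReal.mul_le_mul_iff_left (by simp) (by simp),
      ENNReal.ofReal_le_ofReal_iff'] at h01
    exact h01.resolve_right hm.not_ge
  refine ⟨ENNReal.ofReal (2 * M / m), ?_, ENNReal.ofReal_lt_top, fun x hx r hr => ⟨?_, ?_, ?_⟩⟩
  · rw [ENNReal.one_le_ofReal, le_div_iff₀ hm]
    linarith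
  · exact lt_of_lt_of_le (ENNReal.mul_pos (by simpa using hm)
      (volume_ball_inter_Icc_pos hx (by linarith)).ne') (hball x (2 * r)).1
  · calc ν (Metric.ball x (2 * r) ∩ Set.Icc 0 1)
        ≤ ENNReal.ofReal M * volume (Metric.ball x (2 * r) ∩ Set.Icc 0 1) := (hball _ _).2
      _ ≤ ENNReal.ofReal M * (2 * volume (Metric.ball x r ∩ Set.Icc 0 1)) := by
          gcongr
          exact volume_ball_two_mul_inter_Icc_le hx hr.le
      _ = ENNReal.ofReal (2 * M / m) *
            (ENNReal.ofReal m * volume (Metric.ball x r ∩ Set.Icc 0 1)) := by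
          rw [← mul_assoc, ← mul_assoc, ← ENNReal.ofReal_mul (div_nonneg (by linarith) hm.le),
            div_mul_cancel₀ _ hm.ne', ENNReal.ofReal_mul zero_le_two, ENNReal.ofReal_ofNat,
            mul_comm (ENNReal.ofReal M)]
      _ ≤ ENNReal.ofReal (2 * M / m) * ν (Metric.ball x r ∩ Set.Icc 0 1) := by
          gcongr
          exact (hball x r).1
  · refine (hball x (2 * r)).2.trans_lt (ENNReal.mul_lt_top ENNReal.ofReal_lt_top ?_)
    rw [volume_ball_inter_Icc]
    exact ENNReal.ofReal_lt_top

end Doubling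

section FillWithVolume

noncomputable def fillWithVolume (μ : Measure ℝ) (E : Set ℝ) : Measure ℝ :=
  μ + volume.restrict (Set.Icc 0 1 \ E)

variable {μ : Measure ℝ} {E : Set ℝ}

theorem fillWithVolume_compl_Icc (hμ : μ (Set.Icc 0 1)ᶜ = 0) :
    fillWithVolume μ E (Set.Icc 0 1)ᶜ = 0 := by
  rw [fillWithVolume, Measure.add_apply, hμ, zero_add,
    Measure.restrict_apply measurableSet_Icc.compl]
  exact measure_mono_null (fun x hx => (hx.1 hx.2.1).elim) measure_empty

theorem restrict_fillWithVolume (hE : MeasurableSet E) (hμE : μ Eᶜ = 0) :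
    (fillWithVolume μ E).restrict E = μ := by
  rw [fillWithVolume, Measure.restrict_add, Measure.restrict_eq_self_of_ae_mem (mem_ae_iff.2 hμE),
    Measure.restrict_restrict hE, Set.inter_sdiff_self, Measure.restrict_empty, add_zero]

theorem ofReal_mul_volume_le_fillWithVolume_Ioo (hE : MeasurableSet E) {A : ℝ} {a b : ℝ}
    (hA : ENNReal.ofReal A * volume (Set.Ioo a b ∩ E) ≤ μ (Set.Ioo a b)) (ha : 0 ≤ a)
    (hb : b ≤ 1) :
    ENNReal.ofReal (min A 1) * volume (Set.Ioo a b) ≤ fillWithVolume μ E (Set.Ioo a b) := by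
  have hsub : Set.Ioo a b ⊆ Set.Icc 0 1 := fun x hx => ⟨ha.trans hx.1.le, hx.2.le.trans hb⟩
  rw [fillWithVolume, Measure.add_apply, Measure.restrict_apply measurableSet_Ioo,
    ← Set.inter_sdiff_assoc, Set.inter_eq_left.2 hsub, ← measure_inter_add_sdiff _ hE, mul_add]
  gcongr
  · exact le_trans (by gcongr; exact min_le_left _ _) hA
  · exact mul_le_of_le_one_left' (ENNReal.ofReal_le_one.2 (min_le_right _ _))

theorem fillWithVolume_Icc_le {B : ℝ} (hB : 0 ≤ B) {a b : ℝ}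
    (hμB : μ (Set.Icc a b) ≤ ENNReal.ofReal B * volume (Set.Icc a b)) :
    fillWithVolume μ E (Set.Icc a b) ≤ ENNReal.ofReal (B + 1) * volume (Set.Icc a b) := by
  rw [fillWithVolume, Measure.add_apply, Measure.restrict_apply measurableSet_Icc,
    ENNReal.ofReal_add hB zero_le_one, ENNReal.ofReal_one, add_mul, one_mul]
  exact add_le_add hμB (measure_mono Set.inter_subset_left)

end FillWithVolume

section Geometry

variable {n : ℕ → ℕ} {c : ℕ → ℝ}

theorem IsWord.mono {w : ℕ → ℕ} {k k' : ℕ} (hw : IsWord n w k) (hk : k' ≤ k) : IsWord n w k' :=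
  fun j hj hjk => hw j hj (hjk.trans hk)

@[simp] theorem cdelta_zero : cdelta n c 0 = 1 := by simp [cdelta]

@[simp] theorem leftpt_zero (w : ℕ → ℕ) : leftpt n c w 0 = 0 := by simp [leftpt]

theorem cdelta_succ (k : ℕ) :
    cdelta n c (k + 1) = cdelta n c k * ((1 - ((n (k + 1) : ℝ) - 1) * c (k + 1)) / n (k + 1)) :=
  prod_Icc_succ_top (by omega) _

theorem leftpt_succ (w : ℕ → ℕ) (k : ℕ) :
    leftpt n c w (k + 1) =
      leftpt n c w k + ((w (k + 1) : ℝ) - 1) * (cdelta n c (k + 1) + ceps n c (k + 1)) :=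
  sum_Icc_succ_top (by omega) _

theorem cdelta_factor_pos (h : CantorParams n c) {j : ℕ} (hj : 1 ≤ j) :
    0 < (1 - ((n j : ℝ) - 1) * c j) / n j ∧ (1 - ((n j : ℝ) - 1) * c j) / n j ≤ 1 / 2 := by
  obtain ⟨hn, hc, -, hnc⟩ := h j hj
  have hn' : (2 : ℝ) ≤ n j := by exact_mod_cast hn
  refine ⟨div_pos (by linarith) (by linarith), ?_⟩
  rw [div_le_div_iff₀ (by linarith) two_pos]
  nlinarith

theorem cdelta_pos (h : CantorParams n c) (k : ℕ) : 0 < cdelta n c k :=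
  prod_pos fun _ hj => (cdelta_factor_pos h (Finset.mem_Icc.1 hj).1).1

theorem ceps_pos (h : CantorParams n c) {k : ℕ} (hk : 1 ≤ k) : 0 < ceps n c k :=
  mul_pos (h k hk).2.1 (cdelta_pos h _)

theorem tendsto_cdelta (h : CantorParams n c) : Tendsto (cdelta n c) atTop (𝓝 0) := by
  have hle : ∀ k, cdelta n c k ≤ (1 / 2) ^ k := fun k => by
    calc cdelta n c k ≤ ∏ _j ∈ Finset.Icc 1 k, (1 / 2 : ℝ) :=
          prod_le_prod (fun _ hj => (cdelta_factor_pos h (Finset.mem_Icc.1 hj).1).1.le)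
            fun _ hj => (cdelta_factor_pos h (Finset.mem_Icc.1 hj).1).2
      _ = (1 / 2) ^ k := by simp
  exact squeeze_zero (fun k => (cdelta_pos h k).le) hle
    (tendsto_pow_atTop_nhds_zero_of_lt_one (by norm_num) (by norm_num))

theorem cdelta_eq_children_add_gaps (h : CantorParams n c) (k : ℕ) :
    cdelta n c k = n (k + 1) * cdelta n c (k + 1) + ((n (k + 1) : ℝ) - 1) * ceps n c (k + 1) := by
  have hn : (n (k + 1) : ℝ) ≠ 0 := by have := (h (k + 1) (by omega)).1; positivity
  rw [cdelta_succ, ceps, Nat.add_sub_cancel]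
  field_simp
  ring

theorem cInt_succ_subset (h : CantorParams n c) {w : ℕ → ℕ} {k : ℕ} (hw1 : 1 ≤ w (k + 1))
    (hw2 : w (k + 1) ≤ n (k + 1)) : cInt n c w (k + 1) ⊆ cInt n c w k := by
  have hw1' : (1 : ℝ) ≤ w (k + 1) := by exact_mod_cast hw1
  have hw2' : (w (k + 1) : ℝ) ≤ n (k + 1) := by exact_mod_cast hw2
  have hstep : 0 ≤ cdelta n c (k + 1) + ceps n c (k + 1) :=
    (add_pos (cdelta_pos h _) (ceps_pos h (by omega))).le
  rw [cInt, cInt, leftpt_succ]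
  apply Set.Icc_subset_Icc
  · nlinarith
  · nlinarith [cdelta_eq_children_add_gaps h k]

theorem leftpt_add_cdelta_lt (h : CantorParams n c) {k : ℕ} {w w' : ℕ → ℕ} (hw : IsWord n w k)
    (hw' : IsWord n w' k) (hlt : leftpt n c w k < leftpt n c w' k) :
    leftpt n c w k + cdelta n c k < leftpt n c w' k := by
  induction k generalizing w w' with
  | zero => simp at hlt
  | succ k ih =>
    have hnest : ∀ {v : ℕ → ℕ}, IsWord n v (k + 1) →
        leftpt n c v k ≤ leftpt n c v (k + 1) ∧
          leftpt n c v (k + 1) + cdelta n c (k + 1) ≤ leftpt n c v k + cdelta n c k :=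
      fun {v} hv => (Set.Icc_subset_Icc_iff (by linarith [cdelta_pos h (k + 1)])).1
        (cInt_succ_subset h (hv (k + 1) (by omega) le_rfl).1 (hv (k + 1) (by omega) le_rfl).2)
    have hδ := cdelta_pos h (k + 1)
    rcases lt_trichotomy (leftpt n c w k) (leftpt n c w' k) with hpar | hpar | hpar
    · linarith [ih (hw.mono k.le_succ) (hw'.mono k.le_succ) hpar, (hnest hw).2, (hnest hw').1]
    · -- siblings: their positions differ by at least one step `cdelta + ceps`
      rw [leftpt_succ, leftpt_succ, hpar] at hlt ⊢
      set d := cdelta n c (k + 1) + ceps n c (k + 1)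
      have hd : cdelta n c (k + 1) < d := lt_add_of_pos_right _ (ceps_pos h (by omega))
      have hlt' : w (k + 1) < w' (k + 1) := by
        have : (w (k + 1) : ℝ) - 1 < w' (k + 1) - 1 := lt_of_mul_lt_mul_right
          (by linarith : ((w (k + 1) : ℝ) - 1) * d < (w' (k + 1) - 1) * d) (by linarith)
        exact_mod_cast (by linarith : (w (k + 1) : ℝ) < w' (k + 1))
      have hsucc : (w (k + 1) : ℝ) + 1 ≤ w' (k + 1) := by exact_mod_cast hlt'
      nlinarith
    · linarith [ih (hw'.mono k.le_succ) (hw.mono k.le_succ) hpar, (hnest hw').2, (hnest hw).1]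

def componentLefts (n : ℕ → ℕ) (c : ℕ → ℝ) (k : ℕ) : Set ℝ :=
  (fun w => leftpt n c w k) '' {w | IsWord n w k}

theorem levelSet_eq_biUnion (k : ℕ) :
    levelSet n c k = ⋃ t ∈ componentLefts n c k, Set.Icc t (t + cdelta n c k) := by
  rw [componentLefts, Set.biUnion_image]
  rfl

theorem pairwiseDisjoint_componentLefts (h : CantorParams n c) (k : ℕ) :
    (componentLefts n c k).PairwiseDisjoint fun t => Set.Icc t (t + cdelta n c k) := by
  have hsep : ∀ t ∈ componentLefts n c k, ∀ t' ∈ componentLefts n c k, t < t' →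
      Disjoint (Set.Icc t (t + cdelta n c k)) (Set.Icc t' (t' + cdelta n c k)) := by
    rintro _ ⟨w, hw, rfl⟩ _ ⟨w', hw', rfl⟩ hlt
    exact Set.disjoint_left.2 fun x hx hx' => by
      linarith [hx.2, hx'.1, leftpt_add_cdelta_lt h hw hw' hlt]
  intro t ht t' ht' hne
  rcases hne.lt_or_gt with hlt | hlt
  · exact hsep t ht t' ht' hlt
  · exact (hsep t' ht' t ht hlt).symm

theorem measurableSet_uniformCantorSet (h : CantorParams n c) :
    MeasurableSet (uniformCantorSet n c) := by
  refine MeasurableSet.iInter fun k => ?_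
  rw [levelSet_eq_biUnion]
  exact MeasurableSet.biUnion
    ((pairwiseDisjoint_componentLefts h k).countable_of_Icc (cdelta_pos h k))
    fun _ _ => measurableSet_Icc

theorem uniformCantorSet_subset_Icc : uniformCantorSet n c ⊆ Set.Icc 0 1 := by
  intro x hx
  obtain ⟨w, -, hxw⟩ := Set.mem_iUnion₂.1 (Set.mem_iInter.1 hx 0)
  simpa [cInt] using hxw

theorem uniformCantorSet_subset_biUnion (k : ℕ) :
    uniformCantorSet n c ⊆ ⋃ t ∈ componentLefts n c k, Set.Icc t (t + cdelta n c k) :=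
  levelSet_eq_biUnion (n := n) (c := c) k ▸ Set.iInter_subset _ k

end Geometry

section ComponentMass

variable {n : ℕ → ℕ} {c : ℕ → ℝ} {p : ℕ → ℕ → ℝ} {μ : Measure ℝ}

theorem MatchingSeq.le_one (hp : MatchingSeq n p) {k i : ℕ} (hk : 1 ≤ k)
    (hi : i ∈ Finset.Icc 1 (n k)) : p k i ≤ 1 :=
  (hp k hk).2 ▸ single_le_sum (fun j hj => ((hp k hk).1 j (Finset.mem_Icc.1 hj).1
    (Finset.mem_Icc.1 hj).2).le) hi

theorem MatchingSeq.prod_le (hp : MatchingSeq n p) {k i : ℕ} (hk : 1 ≤ k)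
    (hi : i ∈ Finset.Icc 1 (n k)) : ∏ j ∈ Finset.Icc 1 (n k), p k j ≤ p k i := by
  have hpos : ∀ j ∈ Finset.Icc 1 (n k), 0 < p k j := fun j hj =>
    (hp k hk).1 j (Finset.mem_Icc.1 hj).1 (Finset.mem_Icc.1 hj).2
  rw [← mul_prod_erase _ _ hi]
  exact mul_le_of_le_one_right (hpos i hi).le (prod_le_one
    (fun j hj => (hpos j (mem_of_mem_erase hj)).le)
    fun j hj => hp.le_one hk (mem_of_mem_erase hj))

theorem MatchingSeq.prod_pos (hp : MatchingSeq n p) {k : ℕ} {w : ℕ → ℕ} (hw : IsWord n w k) :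
    0 < ∏ j ∈ Finset.Icc 1 k, p j (w j) :=
  Finset.prod_pos fun j hj => (hp j (Finset.mem_Icc.1 hj).1).1 _
    (hw j (Finset.mem_Icc.1 hj).1 (Finset.mem_Icc.1 hj).2).1
    (hw j (Finset.mem_Icc.1 hj).1 (Finset.mem_Icc.1 hj).2).2

theorem measure_Icc_zero_one_compl (hμ : MatchingMeasure n c p μ) :
    μ (Set.Icc 0 1)ᶜ = 0 :=
  measure_mono_null (Set.compl_subset_compl.2 uniformCantorSet_subset_Icc) hμ.2.1

theorem measure_cInt (hp : MatchingSeq n p) (hμ : MatchingMeasure n c p μ) {k : ℕ}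
    {w : ℕ → ℕ} (hw : IsWord n w k) :
    μ (cInt n c w k) = ENNReal.ofReal (∏ j ∈ Finset.Icc 1 k, p j (w j)) := by
  induction k with
  | zero =>
    have := hμ.1
    simpa [cInt] using (prob_compl_eq_zero_iff measurableSet_Icc).1
      (measure_Icc_zero_one_compl hμ)
  | succ k ih =>
    obtain ⟨hw1, hw2⟩ := hw (k + 1) (by omega) le_rfl
    have hrec := hμ.2.2 (k + 1) (by omega) w (hw.mono (by omega)) (w (k + 1)) hw1 hw2
    rw [Function.update_eq_self, Nat.add_sub_cancel] at hrec
    rw [hrec, ih (hw.mono k.le_succ), prod_Icc_succ_top (by omega), mul_comm,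
      ENNReal.ofReal_mul (hp.prod_pos (hw.mono k.le_succ)).le]

/-- The total length `n 1 ⋯ n k * cdelta n c k` of the level-`k` components. -/
noncomputable def keptProportion (n : ℕ → ℕ) (c : ℕ → ℝ) (k : ℕ) : ℝ :=
  ∏ j ∈ Finset.Icc 1 k, (1 - ((n j : ℝ) - 1) * c j)

theorem cdelta_eq_keptProportion_mul (k : ℕ) :
    cdelta n c k = keptProportion n c k * ∏ j ∈ Finset.Icc 1 k, ((n j : ℝ))⁻¹ := by
  simp only [cdelta, keptProportion, div_eq_mul_inv, prod_mul_distrib]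

theorem exists_pos_le_keptProportion (h : CantorParams n c)
    (hsum : Summable fun k => (n k : ℝ) * c k) : ∃ θ > 0, ∀ k, θ ≤ keptProportion n c k := by
  have hx : ∀ j, 1 ≤ j → 0 ≤ ((n j : ℝ) - 1) * c j ∧ ((n j : ℝ) - 1) * c j < 1 := fun j hj => by
    obtain ⟨hn, hc, -, hnc⟩ := h j hj
    have : (2 : ℝ) ≤ n j := by exact_mod_cast hn
    exact ⟨mul_nonneg (by linarith) hc.le, hnc⟩
  refine exists_pos_le_prod_one_sub hx (hsum.of_norm_bounded_eventually_nat ?_)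
  filter_upwards [eventually_ge_atTop 1] with j hj
  rw [Real.norm_of_nonneg (hx j hj).1]
  nlinarith [(h j hj).2.1]

theorem keptProportion_le_one (h : CantorParams n c) (k : ℕ) : keptProportion n c k ≤ 1 :=
  prod_le_one (fun j hj => by linarith [(h j (Finset.mem_Icc.1 hj).1).2.2.2])
    fun j hj => by
      obtain ⟨hn, hc, -⟩ := h j (Finset.mem_Icc.1 hj).1
      have : (2 : ℝ) ≤ n j := by exact_mod_cast hn
      nlinarith

/-- Beyond level `K` the weights are uniform, so the mass of a level-`k` component is its
ancestor's level-`K` weight times `n (K+1) ⋯ n k`⁻¹. -/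
theorem prod_mul_keptProportion (h : CantorParams n c) {K k : ℕ} (hKk : K ≤ k)
    (huni : ∀ k, K < k → ∀ i, 1 ≤ i → i ≤ n k → p k i = 1 / (n k : ℝ)) {w : ℕ → ℕ}
    (hw : IsWord n w k) :
    (∏ j ∈ Finset.Icc 1 k, p j (w j)) * keptProportion n c k =
      (∏ j ∈ Finset.Icc 1 K, p j (w j)) * (∏ j ∈ Finset.Icc 1 K, (n j : ℝ)) * cdelta n c k := by
  have htail : ∏ j ∈ Finset.Ioc K k, p j (w j) = ∏ j ∈ Finset.Ioc K k, ((n j : ℝ))⁻¹ :=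
    prod_congr rfl fun j hj => by
      obtain ⟨hKj, hjk⟩ := Finset.mem_Ioc.1 hj
      rw [huni j hKj _ (hw j (by omega) hjk).1 (hw j (by omega) hjk).2, one_div]
  have hcancel : (∏ j ∈ Finset.Icc 1 K, (n j : ℝ)) * ∏ j ∈ Finset.Icc 1 K, ((n j : ℝ))⁻¹ = 1 := by
    rw [← prod_mul_distrib]
    refine prod_eq_one fun j hj => mul_inv_cancel₀ ?_
    have := (h j (Finset.mem_Icc.1 hj).1).1
    positivity
  rw [cdelta_eq_keptProportion_mul, ← prod_Icc_one_mul_prod_Ioc _ hKk,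
    ← prod_Icc_one_mul_prod_Ioc (fun j => ((n j : ℝ))⁻¹) hKk, htail]
  linear_combination (-(∏ j ∈ Finset.Icc 1 K, p j (w j)) *
    (∏ j ∈ Finset.Ioc K k, ((n j : ℝ))⁻¹) * keptProportion n c k) * hcancel

theorem exists_measure_cInt_comparable (h : CantorParams n c) (hp : MatchingSeq n p)
    (hsum : Summable fun k => (n k : ℝ) * c k) {K : ℕ}
    (huni : ∀ k, K < k → ∀ i, 1 ≤ i → i ≤ n k → p k i = 1 / (n k : ℝ))
    (hμ : MatchingMeasure n c p μ) :
    ∃ A > 0, ∃ B ≥ 0, ∀ k, K ≤ k → ∀ w, IsWord n w k →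
      ENNReal.ofReal A * volume (cInt n c w k) ≤ μ (cInt n c w k) ∧
        μ (cInt n c w k) ≤ ENNReal.ofReal B * volume (cInt n c w k) := by
  obtain ⟨θ, hθ, hθle⟩ := exists_pos_le_keptProportion h hsum
  set N := ∏ j ∈ Finset.Icc 1 K, (n j : ℝ)
  set a := ∏ j ∈ Finset.Icc 1 K, ∏ i ∈ Finset.Icc 1 (n j), p j i
  have hN : 0 < N := prod_pos fun j hj => by
    have := (h j (Finset.mem_Icc.1 hj).1).1
    positivity
  have ha : 0 < a := prod_pos fun j hj => prod_pos fun i hi =>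
    (hp j (Finset.mem_Icc.1 hj).1).1 i (Finset.mem_Icc.1 hi).1 (Finset.mem_Icc.1 hi).2
  refine ⟨a * N, by positivity, N / θ, by positivity, fun k hKk w hw => ?_⟩
  have hwK : ∀ j ∈ Finset.Icc 1 K, w j ∈ Finset.Icc 1 (n j) := fun j hj =>
    Finset.mem_Icc.2 (hw j (Finset.mem_Icc.1 hj).1 ((Finset.mem_Icc.1 hj).2.trans hKk))
  have hpK0 : ∀ j ∈ Finset.Icc 1 K, 0 ≤ p j (w j) := fun j hj =>
    ((hp j (Finset.mem_Icc.1 hj).1).1 _ (Finset.mem_Icc.1 (hwK j hj)).1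
      (Finset.mem_Icc.1 (hwK j hj)).2).le
  have hlow : a ≤ ∏ j ∈ Finset.Icc 1 K, p j (w j) :=
    prod_le_prod (fun j hj => prod_nonneg fun i hi =>
      ((hp j (Finset.mem_Icc.1 hj).1).1 i (Finset.mem_Icc.1 hi).1 (Finset.mem_Icc.1 hi).2).le)
      fun j hj => hp.prod_le (Finset.mem_Icc.1 hj).1 (hwK j hj)
  have hup : ∏ j ∈ Finset.Icc 1 K, p j (w j) ≤ 1 :=
    prod_le_one hpK0 fun j hj => hp.le_one (Finset.mem_Icc.1 hj).1 (hwK j hj)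
  have hid := prod_mul_keptProportion h hKk huni hw
  have hθk := hθle k
  have hθ1 := keptProportion_le_one h k
  have hδ := cdelta_pos h k
  have hP := hp.prod_pos hw
  rw [measure_cInt hp hμ hw, cInt, Real.volume_Icc, add_sub_cancel_left,
    ← ENNReal.ofReal_mul (by positivity), ← ENNReal.ofReal_mul (by positivity)]
  constructor <;> apply ENNReal.ofReal_le_ofReal
  · nlinarith [mul_le_mul_of_nonneg_right hlow (mul_pos hN hδ).le]
  · rw [div_mul_eq_mul_div, le_div_iff₀ hθ]
    nlinarith [mul_le_mul_of_nonneg_right hup (mul_pos hN hδ).le]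

end ComponentMass

section Limits

variable {n : ℕ → ℕ} {c : ℕ → ℝ} {μ : Measure ℝ}

theorem measure_Icc_le_of_components (h : CantorParams n c)
    (hμE : μ (uniformCantorSet n c)ᶜ = 0)
    {B : ℝ} {K : ℕ} (hB : ∀ k, K ≤ k → ∀ w, IsWord n w k →
      μ (cInt n c w k) ≤ ENNReal.ofReal B * volume (cInt n c w k)) (a b : ℝ) :
    μ (Set.Icc a b) ≤ ENNReal.ofReal B * volume (Set.Icc a b) := by
  have hlim : Tendsto (fun k => ENNReal.ofReal B * ENNReal.ofReal (b - a + 2 * cdelta n c k))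
      atTop (𝓝 (ENNReal.ofReal B * volume (Set.Icc a b))) := by
    rw [Real.volume_Icc]
    refine ENNReal.Tendsto.const_mul (ENNReal.tendsto_ofReal ?_) (Or.inr ENNReal.ofReal_ne_top)
    simpa using ((tendsto_cdelta h).const_mul 2).const_add (b - a)
  refine ge_of_tendsto hlim (eventually_atTop.2 ⟨K, fun k hk => ?_⟩)
  refine measure_Icc_le_of_cover (pairwiseDisjoint_componentLefts h k) (cdelta_pos h k)
    (uniformCantorSet_subset_biUnion k) hμE ?_ a b
  rintro _ ⟨w, hw, rfl⟩
  exact hB k hk w hw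

theorem le_measure_Ioo_of_components (h : CantorParams n c) {A : ℝ} {K : ℕ}
    (hA : ∀ k, K ≤ k → ∀ w, IsWord n w k →
      ENNReal.ofReal A * volume (cInt n c w k) ≤ μ (cInt n c w k)) (a b : ℝ) :
    ENNReal.ofReal A * volume (Set.Ioo a b ∩ uniformCantorSet n c) ≤ μ (Set.Ioo a b) := by
  have hlim : Tendsto (fun k => μ (Set.Ioo a b) + ENNReal.ofReal A *
      ENNReal.ofReal (2 * cdelta n c k)) atTop (𝓝 (μ (Set.Ioo a b))) := by
    have := ENNReal.Tendsto.const_mul (ENNReal.tendsto_ofReal ((tendsto_cdelta h).const_mul 2))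
      (Or.inr (ENNReal.ofReal_ne_top (r := A)))
    simpa using tendsto_const_nhds.add this
  refine ge_of_tendsto hlim (eventually_atTop.2 ⟨K, fun k hk => ?_⟩)
  refine le_measure_Ioo_add_of_cover (pairwiseDisjoint_componentLefts h k) (cdelta_pos h k)
    (uniformCantorSet_subset_biUnion k) ?_ a b
  rintro _ ⟨w, hw, rfl⟩
  exact hA k hk w hw

end Limits

theorem stmt10 (n : ℕ → ℕ) (c : ℕ → ℝ) (p : ℕ → ℕ → ℝ) (μ : Measure ℝ)
    (h : CantorParams n c) (hp : MatchingSeq n p)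
    (hsum : Summable (fun k => (n k : ℝ) * c k))
    (huni : ∃ k₀, 1 ≤ k₀ ∧ ∀ k, k₀ ≤ k → ∀ i, 1 ≤ i → i ≤ n k → p k i = 1 / (n k : ℝ))
    (hμ : MatchingMeasure n c p μ) :
    ∃ ν : Measure ℝ, ν (Set.Icc (0 : ℝ) 1)ᶜ = 0 ∧
      (∃ D : ℝ≥0∞, 1 ≤ D ∧ D < ⊤ ∧ DoublingOn ν (Set.Icc 0 1) D) ∧
      ν.restrict (uniformCantorSet n c) = μ := by
  obtain ⟨k₀, hk₀, huni⟩ := huni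
  obtain ⟨A, hA, B, hB, hcomp⟩ := exists_measure_cInt_comparable h hp hsum (K := k₀ - 1)
    (fun k hk => huni k (by omega)) hμ
  have hE := measurableSet_uniformCantorSet h
  refine ⟨fillWithVolume μ (uniformCantorSet n c),
    fillWithVolume_compl_Icc (measure_Icc_zero_one_compl hμ), ?_,
    restrict_fillWithVolume hE hμ.2.1⟩
  refine exists_doublingOn_Icc_of_comparable (lt_min hA one_pos)
    (fun a b ha hb => ofReal_mul_volume_le_fillWithVolume_Ioo hE ?_ ha hb)
    (fun a b _ _ => fillWithVolume_Icc_le hB ?_)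
  · exact le_measure_Ioo_of_components h (fun k hk w hw => (hcomp k hk w hw).1) a b
  · exact measure_Icc_le_of_components h hμ.2.1 (fun k hk w hw => (hcomp k hk w hw).2) a b
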